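/- Let T be a binary tree on n nodes and P a path from a node r down the tree of length ℓ (each node on P an ancestor of the next). With s(v) the subtree size of v and φ(v) = g(log₂(s(parent v)/s(v))) where g(t)=t/(log₂(2+t))², the sum Σ_{v∈P, v≠r} φ(v) ≤ ℓ·g(log₂(s(r))/ℓ) ≤ C·log₂(s(r)) for an absolute constant C. -/

import Mathlib

/-!
On `[0, ∞)` the function `g` is concave (its second derivative has the sign of
`3t - (4 + t) log (2 + t)`, which is nonpositive by the Padé bound `log x ≥ 2(x - 1)/(x + 1)`)
and satisfies `0 ≤ g t ≤ t`. The base-2 logarithms of the successive ratios of the chain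
`1 ≤ a 0 ≤ ⋯ ≤ a (ℓ - 1)` are nonnegative and, together with `logb 2 (a 0)`, telescope to
`L = logb 2 (a (ℓ - 1))`, so Jensen's inequality for these `ℓ` numbers gives the first bound,
and `g t ≤ t` gives `ℓ g (L / ℓ) ≤ L`.
-/

noncomputable def g (t : ℝ) : ℝ := t / (Real.logb 2 (2 + t)) ^ 2

open Real Set
open scoped Finset

lemma two_mul_sub_one_div_add_one_le_log {x : ℝ} (hx : 1 ≤ x) :
    2 * (x - 1) / (x + 1) ≤ log x := by
  rcases hx.eq_or_lt with rfl | hx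
  · simp
  have hx1 : 0 < x - 1 := sub_pos.mpr hx
  have h := le_hasSum (hasSum_log_one_add_inv (inv_pos.mpr hx1)) 0
    fun k _ => by positivity
  rw [inv_inv, add_sub_cancel] at h
  refine le_of_eq_of_le ?_ h
  have : x + 1 ≠ 0 := by linarith
  norm_num
  field_simp
  ring

lemma three_mul_le_log_two_add {t : ℝ} (ht : 0 ≤ t) : 3 * t ≤ (4 + t) * log (2 + t) := by
  rcases le_total t 2 with ht2 | ht2
  · have hpade := two_mul_sub_one_div_add_one_le_log (x := 2 + t) (by linarith)
    rw [div_le_iff₀ (by linarith)] at hpade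
    nlinarith
  -- For large `t` the Padé bound at `2 + t` is too weak; apply it at `(2 + t) / 4` instead.
  · have hpade := two_mul_sub_one_div_add_one_le_log (x := (2 + t) / 4) (by linarith)
    rw [log_div (by linarith) (by norm_num), show (4 : ℝ) = 2 ^ 2 by norm_num, log_pow,
      div_le_iff₀ (by linarith)] at hpade
    have hlog : 2 * log 2 * (t + 6) + 2 * (t - 2) ≤ (t + 6) * log (2 + t) := by nlinarith
    refine le_of_mul_le_mul_left ?_ (by linarith : (0 : ℝ) < t + 6)
    nlinarith [mul_le_mul_of_nonneg_left hlog (by linarith : (0 : ℝ) ≤ 4 + t),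
      log_two_gt_d9, mul_pos (by linarith : (0 : ℝ) < t) (by linarith : (0 : ℝ) < t)]

lemma hasDerivAt_log_two_add {t : ℝ} (ht : -2 < t) :
    HasDerivAt (fun x => log (2 + x)) (2 + t)⁻¹ t := by
  simpa using ((hasDerivAt_id t).const_add 2).log (by simp; linarith)

lemma hasDerivAt_div_log_two_add_sq {t : ℝ} (ht : -1 < t) :
    HasDerivAt (fun x => x / log (2 + x) ^ 2)
      (((2 + t) * log (2 + t) - 2 * t) / ((2 + t) * log (2 + t) ^ 3)) t := by
  have hL : 0 < log (2 + t) := log_pos (by linarith)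
  have h2t : 2 + t ≠ 0 := by linarith
  refine ((hasDerivAt_id' t).fun_div ((hasDerivAt_log_two_add (by linarith)).fun_pow 2)
    (pow_ne_zero 2 hL.ne')).congr_deriv ?_
  field_simp
  ring

lemma hasDerivAt_deriv_div_log_two_add_sq {t : ℝ} (ht : -1 < t) :
    HasDerivAt (fun x => ((2 + x) * log (2 + x) - 2 * x) / ((2 + x) * log (2 + x) ^ 3))
      (-2 * ((4 + t) * log (2 + t) - 3 * t) / ((2 + t) ^ 2 * log (2 + t) ^ 4)) t := by
  have hL : 0 < log (2 + t) := log_pos (by linarith)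
  have h2t : 2 + t ≠ 0 := by linarith
  have hlog := hasDerivAt_log_two_add (by linarith : -2 < t)
  have hlin : HasDerivAt (fun x => 2 + x) 1 t := (hasDerivAt_id t).const_add 2
  refine (((hlin.fun_mul hlog).fun_sub ((hasDerivAt_id' t).const_mul 2)).fun_div
    (hlin.fun_mul (hlog.fun_pow 3)) (mul_ne_zero h2t (pow_ne_zero 3 hL.ne'))).congr_deriv ?_
  field_simp
  ring

lemma concaveOn_div_log_two_add_sq : ConcaveOn ℝ (Ici 0) fun t => t / log (2 + t) ^ 2 := by
  refine concaveOn_of_hasDerivWithinAt2_nonpos (convex_Ici 0)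
    (fun t ht => (hasDerivAt_div_log_two_add_sq ?_).continuousAt.continuousWithinAt)
    (fun t ht => (hasDerivAt_div_log_two_add_sq ?_).hasDerivWithinAt)
    (fun t ht => (hasDerivAt_deriv_div_log_two_add_sq ?_).hasDerivWithinAt) (fun t ht => ?_)
  all_goals simp only [interior_Ici, mem_Ioi, mem_Ici] at ht
  iterate 3 linarith
  have hL : 0 < log (2 + t) := log_pos (by linarith)
  have := three_mul_le_log_two_add ht.le
  exact div_nonpos_of_nonpos_of_nonneg (by linarith) (by positivity)

lemma g_eq_mul (t : ℝ) : g t = log 2 ^ 2 * (t / log (2 + t) ^ 2) := by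
  rw [g, logb, div_pow, div_div_eq_mul_div, mul_div_assoc']
  ring

lemma concaveOn_g : ConcaveOn ℝ (Ici 0) g := by
  rw [show g = _ from funext g_eq_mul]
  exact concaveOn_div_log_two_add_sq.smul (sq_nonneg (log 2))

lemma g_nonneg {t : ℝ} (ht : 0 ≤ t) : 0 ≤ g t :=
  div_nonneg ht (sq_nonneg _)

lemma g_le_self {t : ℝ} (ht : 0 ≤ t) : g t ≤ t := by
  have h : 1 ≤ logb 2 (2 + t) := by
    rw [le_logb_iff_rpow_le one_lt_two (by linarith), rpow_one]
    linarith
  exact div_le_self ht (one_le_pow₀ h)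

lemma ConcaveOn.sum_le_card_mul_map_div {ι : Type*} {s : Set ℝ} {f : ℝ → ℝ}
    (hf : ConcaveOn ℝ s f) (t : Finset ι) {p : ι → ℝ} (hp : ∀ i ∈ t, p i ∈ s) :
    ∑ i ∈ t, f (p i) ≤ #t * f ((∑ i ∈ t, p i) / #t) := by
  rcases t.eq_empty_or_nonempty with rfl | ht
  · simp
  have hn : (0 : ℝ) < #t := by exact_mod_cast ht.card_pos
  have h := hf.le_map_sum (w := fun _ => (#t : ℝ)⁻¹) (fun _ _ => by positivity)
    (by simp [hn.ne']) hp
  simp only [smul_eq_mul] at h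
  rw [← Finset.mul_sum, ← Finset.mul_sum, inv_mul_eq_div, inv_mul_eq_div] at h
  exact (div_le_iff₀' hn).mp h

lemma ConcaveOn.sum_map_logb_div_le {f : ℝ → ℝ} (hf : ConcaveOn ℝ (Ici 0) f) {b : ℝ}
    (hb : 1 < b) {n : ℕ} {c : ℕ → ℝ} (hpos : ∀ k ≤ n, 0 < c k)
    (hmono : ∀ k < n, c k ≤ c (k + 1)) :
    ∑ k ∈ Finset.range n, f (logb b (c (k + 1) / c k)) ≤ n * f (logb b (c n / c 0) / n) := by
  have hsum : ∑ k ∈ Finset.range n, logb b (c (k + 1) / c k) = logb b (c n / c 0) := by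
    rw [logb_div (hpos n le_rfl).ne' (hpos 0 n.zero_le).ne',
      ← Finset.sum_range_sub fun k => logb b (c k)]
    refine Finset.sum_congr rfl fun k hk => ?_
    have hk := Finset.mem_range.mp hk
    exact logb_div (hpos (k + 1) hk).ne' (hpos k hk.le).ne'
  have hnonneg : ∀ k ∈ Finset.range n, logb b (c (k + 1) / c k) ∈ Ici 0 := fun k hk => by
    have hk := Finset.mem_range.mp hk
    exact logb_nonneg hb ((one_le_div (hpos k hk.le)).mpr (hmono k hk))
  simpa only [hsum, Finset.card_range] using hf.sum_le_card_mul_map_div (Finset.range n) hnonneg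

lemma ConcaveOn.sum_map_logb_div_le_of_one_le {f : ℝ → ℝ} (hf : ConcaveOn ℝ (Ici 0) f)
    (hf₀ : ∀ t, 0 ≤ t → 0 ≤ f t) {b : ℝ} (hb : 1 < b) {m : ℕ} {a : ℕ → ℝ}
    (ha : ∀ k ≤ m, 1 ≤ a k) (hmono : ∀ k < m, a k ≤ a (k + 1)) :
    ∑ k ∈ Finset.range m, f (logb b (a (k + 1) / a k)) ≤
      (m + 1) * f (logb b (a m) / (m + 1)) := by
  -- Prepending `1` to the chain makes the ratios telescope to `a m` itself.
  set c : ℕ → ℝ := fun k => if k = 0 then 1 else a (k - 1)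
  have h := hf.sum_map_logb_div_le hb (n := m + 1) (c := c)
    (fun k hk => by
      rcases k with _ | k
      · simp [c]
      · simpa [c] using zero_lt_one.trans_le (ha k (by omega)))
    (fun k hk => by
      rcases k with _ | k
      · simpa [c] using ha 0 (by omega)
      · simpa [c] using hmono k (by omega))
  rw [Finset.sum_range_succ'] at h
  simp only [c, if_neg (Nat.succ_ne_zero _), Nat.add_sub_cancel, if_pos, div_one,
    Nat.cast_add, Nat.cast_one] at h
  linarith [hf₀ _ (logb_nonneg hb (ha 0 (Nat.zero_le m)))]

theorem stmt_15 : ∃ C : ℝ, 0 < C ∧ ∀ (ℓ : ℕ), 1 ≤ ℓ → ∀ a : ℕ → ℝ,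
    (∀ k, k < ℓ → 1 ≤ a k) → (∀ k, k + 1 < ℓ → a k ≤ a (k + 1)) →
    (∑ k ∈ Finset.range (ℓ - 1), g (Real.logb 2 (a (k + 1) / a k))) ≤
        ℓ * g (Real.logb 2 (a (ℓ - 1)) / ℓ) ∧
    (ℓ : ℝ) * g (Real.logb 2 (a (ℓ - 1)) / ℓ) ≤ C * Real.logb 2 (a (ℓ - 1)) := by
  refine ⟨1, one_pos, fun ℓ hℓ a ha hmono => ?_⟩
  obtain ⟨m, rfl⟩ : ∃ m, ℓ = m + 1 := ⟨ℓ - 1, by omega⟩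
  have hL : 0 ≤ logb 2 (a m) := logb_nonneg one_lt_two (ha m (by omega))
  simp only [Nat.add_sub_cancel, Nat.cast_add, Nat.cast_one]
  refine ⟨concaveOn_g.sum_map_logb_div_le_of_one_le (fun _ => g_nonneg) one_lt_two
    (fun k hk => ha k (by omega)) (fun k hk => hmono k (by omega)), ?_⟩
  calc ((m : ℝ) + 1) * g (logb 2 (a m) / (m + 1))
      ≤ (m + 1) * (logb 2 (a m) / (m + 1)) := by
        gcongr
        exact g_le_self (div_nonneg hL (by positivity))
    _ = 1 * logb 2 (a m) := by field_simp
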